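/- Let g be C¹ and nonzero near c, f(x) = (x-c)^p·g(x) with natural p ≥ 1. Then the function w(x) = -f(x)/f'(x), extended by w(c) = 0, is differentiable at c with w'(c) = -1/p. In particular c is a simple zero of w even when p > 1. -/

import Mathlib

/-!
Writing `f x = (x - c) ^ (n + 1) * g x`, the product rule gives
`f' x = (x - c) ^ n * ((n + 1) * g x + (x - c) * g' x)`, so the common factor `(x - c) ^ n`
cancels in `w = -f / f'` and the slope of `w` at `c` is `-g x / ((n + 1) * g x + (x - c) * g' x)`.
This is continuous at `c`, where it equals `-1 / (n + 1)` because `g c ≠ 0`.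
-/

open Filter Topology

theorem neg_pow_succ_mul_div_pow_mul_div_self {K : Type*} [Field K] {t : K} (ht : t ≠ 0)
    (n : ℕ) (a b : K) : -(t ^ (n + 1) * a) / (t ^ n * b) / t = -a / b := by
  rcases eq_or_ne b 0 with rfl | hb
  · simp
  · field_simp
    ring

theorem hasDerivAt_sub_pow_succ_mul {c g' x : ℝ} {g : ℝ → ℝ} (n : ℕ) (hg : HasDerivAt g g' x) :
    HasDerivAt (fun y => (y - c) ^ (n + 1) * g y)
      ((x - c) ^ n * ((n + 1) * g x + (x - c) * g')) x := by
  refine ((((hasDerivAt_id' x).sub_const c).pow (n + 1)).mul hg).congr_deriv ?_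
  simp only [Pi.pow_apply, Nat.cast_add, Nat.cast_one, add_tsub_cancel_right]
  ring

theorem tendsto_neg_div_mul_add_sub_mul {c m : ℝ} {g g' : ℝ → ℝ} (hm : m ≠ 0)
    (hg : ContinuousAt g c) (hg' : ContinuousAt g' c) (hgc : g c ≠ 0) :
    Tendsto (fun x => -g x / (m * g x + (x - c) * g' x)) (𝓝 c) (𝓝 (-(1 / m))) := by
  have hlim : -(1 / m) = -g c / (m * g c + (c - c) * g' c) := by
    field_simp
    ring
  rw [hlim]
  exact hg.neg.div (continuousAt_const.mul hg |>.add
    ((continuousAt_id.sub continuousAt_const).mul hg')) (by simpa using mul_ne_zero hm hgc)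

/-- the Newton update w = -f/f' of f(x) = (x-c)^p·g(x), extended
by w(c) = 0, is differentiable at c with w'(c) = -1/p. -/
theorem newton_update_simple_zero
    (c : ℝ) (p : ℕ) (hp : 1 ≤ p)
    (g : ℝ → ℝ) (hg : ContDiff ℝ 1 g) (hgc : g c ≠ 0)
    (f : ℝ → ℝ) (hf : ∀ x, f x = (x - c) ^ p * g x)
    (w : ℝ → ℝ)
    (hw : ∀ x, x ≠ c → w x = -f x / deriv f x) (hwc : w c = 0) :
    HasDerivAt w (-(1 / (p : ℝ))) c := by
  obtain ⟨n, rfl⟩ := Nat.exists_eq_add_of_le' hp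
  obtain rfl : f = fun x => (x - c) ^ (n + 1) * g x := funext hf
  have hlim := tendsto_neg_div_mul_add_sub_mul (m := n + 1) (by positivity)
    hg.continuous.continuousAt (hg.continuous_deriv le_rfl).continuousAt hgc
  rw [hasDerivAt_iff_tendsto_slope]
  push_cast
  refine (hlim.mono_left nhdsWithin_le_nhds).congr' ?_
  filter_upwards [self_mem_nhdsWithin] with x hx
  rw [slope_def_field, hwc, sub_zero, hw x hx,
    (hasDerivAt_sub_pow_succ_mul n (hg.differentiable one_ne_zero x).hasDerivAt).deriv,
    neg_pow_succ_mul_div_pow_mul_div_self (sub_ne_zero.mpr hx)]
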